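/- Let Y be an open subset of ℝ^q (q ∈ ℕ), F a nontrivial Hausdorff topological real vector space, f : Y → F a continuous function with f(y) ≠ 0 for all y ∈ Y, φ : Y → ℝ a function, y_0 ∈ Y, and v ∈ F. If the limit of φ(y)·f(y) as y → y_0 (within Y, along y ≠ y_0) exists and equals v, then there exists a ∈ ℝ such that φ(y) → a as y → y_0 (along y ≠ y_0), and a·f(y_0) = v. -/

import Mathlib

/-!
Along an ultrafilter a real function either has a limit or its absolute value tends to infinity.
The second case is impossible: dividing `φ • f` by `φ` would force `f → 0`, while `f → f y₀ ≠ 0`.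
So `φ` converges along every ultrafilter finer than `𝓝[≠] y₀`, and the limit `a` is pinned down by
`a • f y₀ = v`, hence is the same for all of them.
-/

open Set Filter Topology

section TendstoSMul

variable {α F : Type*} [AddCommGroup F] [Module ℝ F] [TopologicalSpace F]
  [ContinuousSMul ℝ F] [T2Space F]
  {c : α → ℝ} {x : α → F} {w v : F}

theorem Ultrafilter.tendsto_abs_atTop_or_exists_tendsto (U : Ultrafilter α) (c : α → ℝ) :
    Tendsto (fun i => |c i|) U atTop ∨ ∃ a, Tendsto c U (𝓝 a) := by
  by_cases hbdd : ∃ R, ∀ᶠ i in U, |c i| ≤ R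
  · obtain ⟨R, hR⟩ := hbdd
    have hIcc : Icc (-R) R ∈ U.map c := hR.mono fun i hi => abs_le.1 hi
    obtain ⟨a, -, ha⟩ := isCompact_Icc.ultrafilter_le_nhds (U.map c) (le_principal_iff.2 hIcc)
    exact Or.inr ⟨a, ha⟩
  · simp only [not_exists] at hbdd
    exact Or.inl <| tendsto_atTop.2 fun R =>
      (U.eventually_not.2 (hbdd R)).mono fun i hi => (not_le.1 hi).le

theorem not_tendsto_abs_atTop_of_tendsto_smul {l : Filter α} [l.NeBot]
    (hx : Tendsto x l (𝓝 w)) (hw : w ≠ 0) (hcx : Tendsto (fun i => c i • x i) l (𝓝 v)) :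
    ¬Tendsto (fun i => |c i|) l atTop := by
  intro hc
  have hinv : Tendsto (fun i => (c i)⁻¹) l (𝓝 0) := by
    rw [tendsto_zero_iff_abs_tendsto_zero]
    simpa only [Function.comp_def, abs_inv] using tendsto_inv_atTop_zero.comp hc
  have hcancel : (fun i => (c i)⁻¹ • (c i • x i)) =ᶠ[l] x := by
    filter_upwards [hc.eventually_gt_atTop 0] with i hi
    rw [inv_smul_smul₀ (abs_pos.1 hi)]
  have hx0 : Tendsto x l (𝓝 0) := by
    simpa only [zero_smul] using (hinv.smul hcx).congr' hcancel
  exact hw (tendsto_nhds_unique hx hx0)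

theorem Ultrafilter.exists_tendsto_of_tendsto_smul (U : Ultrafilter α)
    (hx : Tendsto x U (𝓝 w)) (hw : w ≠ 0) (hcx : Tendsto (fun i => c i • x i) U (𝓝 v)) :
    ∃ a, Tendsto c U (𝓝 a) ∧ a • w = v := by
  obtain hc | ⟨a, ha⟩ := U.tendsto_abs_atTop_or_exists_tendsto c
  · exact absurd hc (not_tendsto_abs_atTop_of_tendsto_smul hx hw hcx)
  · exact ⟨a, ha, tendsto_nhds_unique (ha.smul hx) hcx⟩

theorem exists_tendsto_of_tendsto_smul {l : Filter α} [l.NeBot]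
    (hx : Tendsto x l (𝓝 w)) (hw : w ≠ 0) (hcx : Tendsto (fun i => c i • x i) l (𝓝 v)) :
    ∃ a, Tendsto c l (𝓝 a) ∧ a • w = v := by
  have limit_along (U : Ultrafilter α) (hU : ↑U ≤ l) : ∃ a, Tendsto c U (𝓝 a) ∧ a • w = v :=
    U.exists_tendsto_of_tendsto_smul (hx.mono_left hU) hw (hcx.mono_left hU)
  obtain ⟨a, -, ha⟩ := limit_along (Ultrafilter.of l) (Ultrafilter.of_le l)
  refine ⟨a, (tendsto_iff_ultrafilter c l _).2 fun U hU => ?_, ha⟩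
  obtain ⟨b, hb, hbw⟩ := limit_along U hU
  rwa [smul_left_injective ℝ hw (hbw.trans ha.symm)] at hb

end TendstoSMul

theorem IsOpen.nhdsNE_subtype_neBot {X : Type*} [TopologicalSpace X] {Y : Set X} (hY : IsOpen Y)
    (y : Y) [(𝓝[≠] (y : X)).NeBot] : (𝓝[≠] y).NeBot := by
  rw [nhds_ne_subtype_neBot_iff,
    inf_of_le_left (le_principal_iff.2 (mem_nhdsWithin_of_mem_nhds (hY.mem_nhds y.2)))]
  infer_instance

theorem cancellation {q : ℕ} (hq : 0 < q) (Y : Set (Fin q → ℝ)) (hY : IsOpen Y)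
    {F : Type*} [AddCommGroup F] [Module ℝ F] [TopologicalSpace F]
    [ContinuousSMul ℝ F] [T2Space F]
    (f : Y → F) (hf : Continuous f) (hfz : ∀ y : Y, f y ≠ 0)
    (φ : Y → ℝ) (y₀ : Y) (v : F)
    (hlim : Filter.Tendsto (fun y => φ y • f y) (𝓝[≠] y₀) (𝓝 v)) :
    ∃ a : ℝ, Filter.Tendsto φ (𝓝[≠] y₀) (𝓝 a) ∧ a • f y₀ = v := by
  have : Nonempty (Fin q) := Fin.pos_iff_nonempty.mp hq
  have : (𝓝[≠] y₀).NeBot := hY.nhdsNE_subtype_neBot y₀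
  exact exists_tendsto_of_tendsto_smul ((hf.tendsto y₀).mono_left nhdsWithin_le_nhds) (hfz y₀) hlim
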